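/- Suppose the game with hint ⟨G, h, g, B, w_B⟩ is winning, where g(B) ≤ w_B ≤ h(B). Let G̃ be G plus a new vertex A joined only to B, with g(A) ≤ w_A ≤ h(A). If w_B·h(A) is divisible by h(B) and w_A·w_B ≥ (w_A − g(A))·h(B), then the game with hint ⟨G̃, h̃, g̃, A, w_A⟩ is winning. -/

import Mathlib

/-!
Give the sages of `G` the hint `c(A) · w_B`: `B` sees `A`, so this is the window of width `w_B`
starting at `c(A) · w_B` (mod `h(B)`). If `c(B)` lies in that window, the strategy on `G` wins.
Otherwise `A`, who sees `c(B)`, knows that its own color is one of the colors `a` of its hint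
window for which `c(B)` misses the window at `a · w_B`, and guesses all of them. Since
`h(B) ∣ w_B · h(A)`, the `w_A` windows attached to the consecutive colors of `A`'s hint window
tile `w_A · w_B ≥ (w_A − g(A)) · h(B)` consecutive residues, so `c(B)` lies in at least
`w_A − g(A)` of them and at most `g(A)` colors are left to guess.
-/

/-- Winning strategy in the hat guessing game with a hint: the adversary privately tells
sage `B` a number `x` such that `B`'s hat color lies in the set of `w` cyclically consecutive
colors `{x, x+1, …, x+w-1 mod h B}`. Strategies of sages other than `B` may not depend on the
hint. -/
def HintWinning {V : Type*} (G : SimpleGraph V) (h g : V → ℕ) (B : V) (w : ℕ) : Prop :=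
  ∃ σ : V → (V → ℕ) → ℕ → Finset ℕ,
    (∀ v, v ≠ B → ∀ c x x', σ v c x = σ v c x') ∧
    (∀ v c c' x, (∀ u, G.Adj v u → c u = c' u) → σ v c x = σ v c' x) ∧
    (∀ v c x, (σ v c x).card ≤ g v) ∧
    ∀ c : V → ℕ, (∀ v, c v < h v) →
      ∀ x : ℕ, (∃ k < w, c B = (x + k) % h B) → ∃ v, c v ∈ σ v c x

/-- The graph `G̃` obtained from `G` by appending a new vertex (`none`) joined only to `B`. -/
def addLeaf {V : Type*} (G : SimpleGraph V) (B : V) : SimpleGraph (Option V) :=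
  SimpleGraph.fromRel (fun x y =>
    (∃ u w : V, x = some u ∧ y = some w ∧ G.Adj u w) ∨ (x = none ∧ y = some B))

open Finset

def InCyclicWindow (m w s b : ℕ) : Prop :=
  ∃ j < w, b = (s + j) % m

instance (m w s b : ℕ) : Decidable (InCyclicWindow m w s b) :=
  inferInstanceAs (Decidable (∃ j < w, b = (s + j) % m))

theorem inCyclicWindow_iff_of_modEq {m w s s' b : ℕ} (h : s ≡ s' [MOD m]) :
    InCyclicWindow m w s b ↔ InCyclicWindow m w s' b := by
  have hshift : ∀ j, (s + j) % m = (s' + j) % m := fun j => h.add_right j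
  simp only [InCyclicWindow, hshift]

theorem mod_mul_modEq_of_dvd {m n w : ℕ} (hdvd : m ∣ w * n) (a : ℕ) :
    a % n * w ≡ a * w [MOD m] := by
  have hsplit : a * w = a % n * w + a / n * (w * n) := by
    conv_lhs => rw [← Nat.mod_add_div a n]
    ring
  have hmul : a / n * (w * n) ≡ 0 [MOD m] :=
    Nat.modEq_zero_iff_dvd.2 (dvd_mul_of_dvd_right hdvd _)
  rw [hsplit]
  simpa using (hmul.add_left (a % n * w)).symm

theorem exists_lt_add_mod_eq {m b : ℕ} (s : ℕ) (hb : b < m) : ∃ r < m, (s + r) % m = b := by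
  refine ⟨(b + (m - s % m)) % m, Nat.mod_lt _ (by omega), ?_⟩
  have hs := Nat.mod_lt s (show 0 < m by omega)
  have hsplit := Nat.mod_add_div s m
  generalize s % m = p, s / m = q at hs hsplit
  rw [Nat.add_mod_mod, ← hsplit, show p + m * q + (b + (m - p)) = b + m * (q + 1) by
    rw [Nat.mul_succ]; omega, Nat.add_mul_mod_self_left, Nat.mod_eq_of_lt hb]

theorem le_card_filter_inCyclicWindow {m w n t b : ℕ} (s : ℕ) (hb : b < m) (hwm : w ≤ m)
    (ht : t * m ≤ n * w) :
    t ≤ ((range n).filter fun k => InCyclicWindow m w (s + k * w) b).card := by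
  rcases t.eq_zero_or_pos with rfl | ht0
  · exact Nat.zero_le _
  have hw : 0 < w := Nat.pos_of_ne_zero fun hw0 => by
    subst hw0; simp only [mul_zero, nonpos_iff_eq_zero, mul_eq_zero] at ht; omega
  obtain ⟨r, hr, hrb⟩ := exists_lt_add_mod_eq s hb
  -- the `i`-th occurrence `s + r + i * m` of the residue `b` lies in the window number `f i`
  let f : ℕ → ℕ := fun i => (r + i * m) / w
  have hf : StrictMono f := strictMono_nat_of_lt_succ fun i => by
    calc f i < (r + i * m + w) / w := by rw [Nat.add_div_right _ hw]; exact Nat.lt_succ_self _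
      _ ≤ f (i + 1) := Nat.div_le_div_right (by rw [Nat.succ_mul]; omega)
  have hmaps :
      Set.MapsTo f (range t) ((range n).filter fun k => InCyclicWindow m w (s + k * w) b) := by
    intro i hi
    have hit : i * m + m ≤ t * m := by
      rw [← Nat.succ_mul]; exact Nat.mul_le_mul_right _ (mem_range.1 hi)
    rw [coe_filter, Set.mem_ofPred_eq, mem_range]
    refine ⟨Nat.div_lt_of_lt_mul (by rw [mul_comm w]; omega),
      (r + i * m) % w, Nat.mod_lt _ hw, ?_⟩
    rw [add_assoc, Nat.div_add_mod', ← add_assoc, Nat.add_mul_mod_self_right, hrb]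
  simpa using card_le_card_of_injOn f hmaps hf.injective.injOn

/-- The guess of the new leaf `A`, given its hint `x` and the color `b` of `B`. -/
def leafGuess (hA gA wA hB wB x b : ℕ) : Finset ℕ :=
  let bad := ((range wA).image fun k => (x + k) % hA).filter
    fun a => ¬ InCyclicWindow hB wB (a * wB) b
  if bad.card ≤ gA then bad else ∅

theorem card_leafGuess_le (hA gA wA hB wB x b : ℕ) :
    (leafGuess hA gA wA hB wB x b).card ≤ gA := by
  dsimp only [leafGuess]
  split_ifs with h
  exacts [h, Nat.zero_le _]

theorem mem_leafGuess {hA gA wA hB wB x b k : ℕ} (hb : b < hB) (hwB : wB ≤ hB)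
    (hdvd : hB ∣ wB * hA) (hineq : (wA - gA) * hB ≤ wA * wB) (hk : k < wA)
    (hmiss : ¬ InCyclicWindow hB wB ((x + k) % hA * wB) b) :
    (x + k) % hA ∈ leafGuess hA gA wA hB wB x b := by
  have hstart : ∀ i, InCyclicWindow hB wB ((x + i) % hA * wB) b ↔
      InCyclicWindow hB wB (x * wB + i * wB) b := fun i =>
    inCyclicWindow_iff_of_modEq ((mod_mul_modEq_of_dvd hdvd _).trans (by rw [add_mul]))
  have hcovered := le_card_filter_inCyclicWindow (x * wB) hb hwB hineq
  have hsplit := card_filter_add_card_filter_not (s := range wA)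
    fun k => InCyclicWindow hB wB (x * wB + k * wB) b
  have hbad : ((range wA).filter fun k => ¬ InCyclicWindow hB wB ((x + k) % hA * wB) b).card
      ≤ gA := by
    simp only [hstart, card_range] at hsplit ⊢
    omega
  dsimp only [leafGuess]
  rw [filter_image, if_pos (card_image_le.trans hbad)]
  exact mem_image_of_mem _ (mem_filter.2 ⟨mem_range.2 hk, hmiss⟩)

theorem addLeaf_adj_none_some {V : Type*} (G : SimpleGraph V) (B : V) :
    (addLeaf G B).Adj none (some B) := by
  rw [addLeaf, SimpleGraph.fromRel_adj]
  exact ⟨by simp, Or.inl (Or.inr ⟨rfl, rfl⟩)⟩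

theorem addLeaf_adj_some_some {V : Type*} {G : SimpleGraph V} (B : V) {u v : V}
    (huv : G.Adj u v) : (addLeaf G B).Adj (some u) (some v) := by
  rw [addLeaf, SimpleGraph.fromRel_adj]
  exact ⟨by simpa using huv.ne, Or.inl (Or.inl ⟨u, v, rfl, rfl, huv⟩)⟩

def leafStrategy {V : Type*} (σ : V → (V → ℕ) → ℕ → Finset ℕ) (B : V)
    (hA gA wA hB wB : ℕ) : Option V → (Option V → ℕ) → ℕ → Finset ℕ
  | none, c, x => leafGuess hA gA wA hB wB x (c (some B))
  | some v, c, _ => σ v (fun u => c (some u)) (c none * wB)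

theorem leafStrategy_congr {V : Type*} {G : SimpleGraph V}
    {σ : V → (V → ℕ) → ℕ → Finset ℕ} {B : V} {hA gA wA hB wB : ℕ}
    (hhint : ∀ v, v ≠ B → ∀ c x x', σ v c x = σ v c x')
    (hlocal : ∀ v c c' x, (∀ u, G.Adj v u → c u = c' u) → σ v c x = σ v c' x)
    (v : Option V) (c c' : Option V → ℕ) (x : ℕ)
    (hcc' : ∀ u, (addLeaf G B).Adj v u → c u = c' u) :
    leafStrategy σ B hA gA wA hB wB v c x = leafStrategy σ B hA gA wA hB wB v c' x := by
  cases v with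
  | none => simp only [leafStrategy, hcc' _ (addLeaf_adj_none_some G B)]
  | some v =>
    have hsameHint : σ v (fun u => c (some u)) (c none * wB) =
        σ v (fun u => c (some u)) (c' none * wB) := by
      by_cases hvB : v = B
      · subst hvB; rw [hcc' none (addLeaf_adj_none_some G v).symm]
      · exact hhint v hvB _ _ _
    exact hsameHint.trans (hlocal v _ _ _ fun u hu => hcc' (some u) (addLeaf_adj_some_some B hu))

theorem hint_transfer {V : Type*} (G : SimpleGraph V) (h g : V → ℕ) (B : V)
    (hA gA wA wB : ℕ)
    (hwB₂ : wB ≤ h B)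
    (hdvd : h B ∣ wB * hA) (hineq : (wA - gA) * h B ≤ wA * wB)
    (hwin : HintWinning G h g B wB) :
    HintWinning (addLeaf G B) (fun x => x.elim hA h) (fun x => x.elim gA g) none wA := by
  obtain ⟨σ, hhint, hlocal, hcard, hwins⟩ := hwin
  refine ⟨leafStrategy σ B hA gA wA (h B) wB, ?_, leafStrategy_congr hhint hlocal, ?_, ?_⟩
  · rintro (_ | v) hv c x x'
    exacts [absurd rfl hv, rfl]
  · rintro (_ | v) c x
    exacts [card_leafGuess_le .., hcard ..]
  · rintro c hc x ⟨k, hk, hck⟩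
    by_cases hcov : InCyclicWindow (h B) wB (c none * wB) (c (some B))
    · obtain ⟨v, hv⟩ := hwins (fun u => c (some u)) (fun u => hc (some u)) _ hcov
      exact ⟨some v, hv⟩
    · refine ⟨none, ?_⟩
      rw [hck] at hcov ⊢
      exact mem_leafGuess (hc (some B)) hwB₂ hdvd hineq hk hcov
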